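/- Let U ⊆ ℍ be open, f₀, f₁ : ℝ⁴ → ℝ be C¹, f : U → ℍ be given by f(x) = f₁(x₁,x₂,x₃,x₄)e₁ + ∑ᵢ₌₂⁴ xᵢ f₀(x₁,x₂,x₃,x₄)eᵢ, and c = ∑ₖcₖeₖ ∈ U. If there exists L ∈ ℍ such that (Δq)⁻¹·{ f(c+Δq) − f(c) + ∑ᵢ₌₂⁴ [ f←ᶜᵢ(c + (Δq)ᵢ·(e₁+e₂+e₃+e₄)) − f←ᶜᵢ(c) ] } tends to L as Δq → 0 along the punctured neighborhood filter 𝓝[≠] 0 in ℍ (where (Δq)ᵢ denotes the i-th real coordinate of Δq), then f is algebraic regular at c and L = ∂f/∂x₁(c). -/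

import Mathlib

open scoped Quaternion

noncomputable section

/-- The standard basis `e₁ = 1, e₂ = i, e₃ = j, e₄ = k` of the quaternions. -/
def e : Fin 4 → ℍ[ℝ] := ![1, ⟨0,1,0,0⟩, ⟨0,0,1,0⟩, ⟨0,0,0,1⟩]

/-- The real coordinates of a quaternion. -/
def toTuple (x : ℍ[ℝ]) : Fin 4 → ℝ := ![x.re, x.imI, x.imJ, x.imK]
/-- The `i`-th partial derivative of a function `g : ℝ⁴ → ℝ`. -/
def pd (g : (Fin 4 → ℝ) → ℝ) (i : Fin 4) (p : Fin 4 → ℝ) : ℝ :=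
  fderiv ℝ g p (Pi.single i 1)

/-- `f` is given on `U` by `f(x) = f₁(x₁,x₂,x₃,x₄)e₁ + ∑ₖ₌₂⁴ xₖ f₀(x₁,x₂,x₃,x₄)eₖ`. -/
def Represents (f : ℍ[ℝ] → ℍ[ℝ]) (U : Set ℍ[ℝ]) (f₀ f₁ : (Fin 4 → ℝ) → ℝ) : Prop :=
  ∀ x ∈ U, f x = f₁ (toTuple x) • e 0 + (x.imI * f₀ (toTuple x)) • e 1 +
    (x.imJ * f₀ (toTuple x)) • e 2 + (x.imK * f₀ (toTuple x)) • e 3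

/-- The generalized Cauchy–Riemann equations (ii) of algebraic regularity, at `p ∈ ℝ⁴`. -/
def RegularEqs (f₀ f₁ : (Fin 4 → ℝ) → ℝ) (p : Fin 4 → ℝ) : Prop :=
  pd f₁ 0 p = f₀ p + p 1 * pd f₀ 1 p + p 2 * pd f₀ 2 p + p 3 * pd f₀ 3 p ∧
  (∀ i : Fin 4, i ≠ 0 → pd f₁ i p = -(p i * pd f₀ 0 p)) ∧
  (∀ i j : Fin 4, i ≠ 0 → j ≠ 0 → i ≠ j → p i * pd f₀ j p = p j * pd f₀ i p)

/-- `f` is algebraic regular at `c ∈ U`. -/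
def AlgebraicRegularAt (f : ℍ[ℝ] → ℍ[ℝ]) (U : Set ℍ[ℝ]) (c : ℍ[ℝ]) : Prop :=
  ∃ f₀ f₁ : (Fin 4 → ℝ) → ℝ, ContDiff ℝ 1 f₀ ∧ ContDiff ℝ 1 f₁ ∧
    Represents f U f₀ f₁ ∧ RegularEqs f₀ f₁ (toTuple c)

/-- `f` is algebraic regular on `U`. -/
def AlgebraicRegularOn (f : ℍ[ℝ] → ℍ[ℝ]) (U : Set ℍ[ℝ]) : Prop :=
  ∀ c ∈ U, AlgebraicRegularAt f U c
/-- The function `f←ᶜ₄` (case `i = 2, j = 3` of (113)). -/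
def flFour (f₀ : (Fin 4 → ℝ) → ℝ) (c : ℍ[ℝ]) (x : ℍ[ℝ]) : ℍ[ℝ] :=
  (c.imI * f₀ ![c.re, x.imI, c.imJ, c.imK] + c.imJ * f₀ ![c.re, c.imI, x.imJ, c.imK]) • e 3 -
  ((-1 : ℝ) ^ (2 + 3) * c.imI * f₀ ![x.re, c.imI, c.imJ, c.imK] +
    c.imK * f₀ ![c.re, c.imI, x.imJ, c.imK]) • e 2 +
  ((-1 : ℝ) ^ (2 + 3) * c.imJ * f₀ ![x.re, c.imI, c.imJ, c.imK] -
    c.imK * f₀ ![c.re, x.imI, c.imJ, c.imK]) • e 1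

/-- The function `f←ᶜ₃` (case `i = 2, j = 4` of (113)). -/
def flThree (f₀ : (Fin 4 → ℝ) → ℝ) (c : ℍ[ℝ]) (x : ℍ[ℝ]) : ℍ[ℝ] :=
  (c.imI * f₀ ![c.re, x.imI, c.imJ, c.imK] + c.imK * f₀ ![c.re, c.imI, c.imJ, x.imK]) • e 2 -
  ((-1 : ℝ) ^ (2 + 4) * c.imI * f₀ ![x.re, c.imI, c.imJ, c.imK] +
    c.imJ * f₀ ![c.re, c.imI, c.imJ, x.imK]) • e 3 +
  ((-1 : ℝ) ^ (2 + 4) * c.imK * f₀ ![x.re, c.imI, c.imJ, c.imK] -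
    c.imJ * f₀ ![c.re, x.imI, c.imJ, c.imK]) • e 1

/-- The function `f←ᶜ₂` (case `i = 3, j = 4` of (113)). -/
def flTwo (f₀ : (Fin 4 → ℝ) → ℝ) (c : ℍ[ℝ]) (x : ℍ[ℝ]) : ℍ[ℝ] :=
  (c.imJ * f₀ ![c.re, c.imI, x.imJ, c.imK] + c.imK * f₀ ![c.re, c.imI, c.imJ, x.imK]) • e 1 -
  ((-1 : ℝ) ^ (3 + 4) * c.imJ * f₀ ![x.re, c.imI, c.imJ, c.imK] +
    c.imI * f₀ ![c.re, c.imI, c.imJ, x.imK]) • e 3 +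
  ((-1 : ℝ) ^ (3 + 4) * c.imK * f₀ ![x.re, c.imI, c.imJ, c.imK] -
    c.imI * f₀ ![c.re, c.imI, x.imJ, c.imK]) • e 2

/-- The left difference quotient of Proposition 4.1 (ii). -/
def leftQuot (f : ℍ[ℝ] → ℍ[ℝ]) (f₀ : (Fin 4 → ℝ) → ℝ) (c : ℍ[ℝ]) (Δq : ℍ[ℝ]) : ℍ[ℝ] :=
  (Δq)⁻¹ *
    (f (c + Δq) - f c +
      (flTwo f₀ c (c + Δq.imI • (e 0 + e 1 + e 2 + e 3)) - flTwo f₀ c c) +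
      (flThree f₀ c (c + Δq.imJ • (e 0 + e 1 + e 2 + e 3)) - flThree f₀ c c) +
      (flFour f₀ c (c + Δq.imK • (e 0 + e 1 + e 2 + e 3)) - flFour f₀ c c))

/-!
Near `0` the numerator `g` of the left quotient is a `C¹` function of `Δq` with `g 0 = 0`, so
along a real line `Δq = t • v` the quotient `(t • v)⁻¹ * g (t • v)` tends to `v⁻¹ * ∂ᵥg(0)`, and
the limit `L` satisfies `∂ᵥg(0) = v * L` for every direction `v`. Along `e 0` the correction
terms `f←ᶜₖ` stay constant and this says `L = ∂f/∂x₁(c)`. Along `e k`, `k = 1, 2, 3`, exactly one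
correction term moves, and comparing the real components of `∂_{e k} g(0) = e k * L` with those
of `L` gives the generalized Cauchy–Riemann equations.
-/

open Filter Topology

theorem HasLineDerivAt.eq_mul_of_tendsto_inv_mul {𝕜 A : Type*} [NontriviallyNormedField 𝕜]
    [NormedDivisionRing A] [NormedAlgebra 𝕜 A] {g : A → A} {v D L : A}
    (hD : HasLineDerivAt 𝕜 g D 0 v) (hv : v ≠ 0) (hg : g 0 = 0)
    (hL : Tendsto (fun q => q⁻¹ * g q) (𝓝[≠] 0) (𝓝 L)) : D = v * L := by
  have hline : Tendsto (fun t : 𝕜 => t • v) (𝓝[≠] 0) (𝓝[≠] 0) := by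
    refine tendsto_nhdsWithin_of_tendsto_nhds_of_eventually_within _ ?_ ?_
    · exact tendsto_nhdsWithin_of_tendsto_nhds
        ((continuous_id.smul continuous_const).tendsto' _ _ (zero_smul 𝕜 v))
    · filter_upwards [self_mem_nhdsWithin] with t ht using smul_ne_zero ht hv
  have hslope : Tendsto (fun t : 𝕜 => (t • v)⁻¹ * g (t • v)) (𝓝[≠] 0) (𝓝 (v⁻¹ * D)) := by
    refine (hD.tendsto_slope_zero.const_mul v⁻¹).congr fun t => ?_
    simp [hg, smul_inv₀]
  rw [tendsto_nhds_unique (hL.comp hline) hslope, mul_inv_cancel_left₀ hv]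

section Coordinates

@[simp] lemma toTuple_apply_one (x : ℍ[ℝ]) : toTuple x 1 = x.imI := rfl
@[simp] lemma toTuple_apply_two (x : ℍ[ℝ]) : toTuple x 2 = x.imJ := rfl
@[simp] lemma toTuple_apply_three (x : ℍ[ℝ]) : toTuple x 3 = x.imK := rfl

def toTupleCLM : ℍ[ℝ] →L[ℝ] Fin 4 → ℝ :=
  LinearMap.toContinuousLinearMap
    { toFun := toTuple
      map_add' := fun x y => by funext m; fin_cases m <;> rfl
      map_smul' := fun r x => by funext m; fin_cases m <;> rfl }

lemma toTupleCLM_apply (x : ℍ[ℝ]) : toTupleCLM x = toTuple x := rfl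

lemma toTuple_e (k : Fin 4) : toTuple (e k) = Pi.single k 1 := by
  funext m; fin_cases k <;> fin_cases m <;> rfl

lemma e_ne_zero (k : Fin 4) : e k ≠ 0 := fun h => by
  have : toTupleCLM (e k) = Pi.single k 1 := toTuple_e k
  simp [h, eq_comm (a := (0 : Fin 4 → ℝ))] at this

lemma toTuple_add_smul_sum_e (c : ℍ[ℝ]) (t : ℝ) (m : Fin 4) :
    toTuple (c + t • (e 0 + e 1 + e 2 + e 3)) m = toTuple c m + t := by
  change toTupleCLM (c + t • (e 0 + e 1 + e 2 + e 3)) m = toTupleCLM c m + t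
  simp only [map_add, map_smul, toTupleCLM_apply, toTuple_e]
  fin_cases m <;> simp

lemma fderiv_apply_toTuple_e (g : (Fin 4 → ℝ) → ℝ) (p : Fin 4 → ℝ) (k : Fin 4) :
    fderiv ℝ g p (toTuple (e k)) = pd g k p := by
  rw [toTuple_e, pd]

lemma HasFDerivAt.hasLineDerivAt_comp_toTuple {F : Type*} [NormedAddCommGroup F]
    [NormedSpace ℝ F] {g : (Fin 4 → ℝ) → F} {g' : (Fin 4 → ℝ) →L[ℝ] F} {c : ℍ[ℝ]}
    (hg : HasFDerivAt g g' (toTuple c)) (v : ℍ[ℝ]) :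
    HasLineDerivAt ℝ (fun x => g (toTuple x)) (g' (toTuple v)) c v :=
  (hg.comp c toTupleCLM.hasFDerivAt).hasLineDerivAt v

lemma hasLineDerivAt_toTuple_apply (m : Fin 4) (c v : ℍ[ℝ]) :
    HasLineDerivAt ℝ (fun x => toTuple x m) (toTuple v m) c v :=
  (hasFDerivAt_apply m (toTuple c)).hasLineDerivAt_comp_toTuple v

lemma hasDerivAt_comp_update {g : (Fin 4 → ℝ) → ℝ} {p : Fin 4 → ℝ}
    (hg : DifferentiableAt ℝ g p) (m : Fin 4) :
    HasDerivAt (fun t => g (Function.update p m (p m + t))) (pd g m p) 0 := by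
  have hline := (hasDerivAt_update p m (p m + 0)).scomp 0 ((hasDerivAt_id 0).const_add (p m))
  rw [one_smul] at hline
  have hg' : HasFDerivAt g (fderiv ℝ g p) (Function.update p m (p m + 0)) := by
    simpa using hg.hasFDerivAt
  exact hg'.comp_hasDerivAt 0 hline

end Coordinates

section Represented

variable {f₀ f₁ : (Fin 4 → ℝ) → ℝ}

def reprFun (f₀ f₁ : (Fin 4 → ℝ) → ℝ) (x : ℍ[ℝ]) : ℍ[ℝ] :=
  f₁ (toTuple x) • e 0 + (x.imI * f₀ (toTuple x)) • e 1 +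
    (x.imJ * f₀ (toTuple x)) • e 2 + (x.imK * f₀ (toTuple x)) • e 3

lemma Represents.eventuallyEq {f : ℍ[ℝ] → ℍ[ℝ]} {U : Set ℍ[ℝ]} {c : ℍ[ℝ]}
    (hf : Represents f U f₀ f₁) (hU : IsOpen U) (hc : c ∈ U) : f =ᶠ[𝓝 c] reprFun f₀ f₁ :=
  eventuallyEq_of_mem (hU.mem_nhds hc) hf

lemma differentiable_reprFun (hf₀ : Differentiable ℝ f₀) (hf₁ : Differentiable ℝ f₁) :
    Differentiable ℝ (reprFun f₀ f₁) := by
  have hT : Differentiable ℝ toTuple := toTupleCLM.differentiable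
  have hcoord (m : Fin 4) : Differentiable ℝ (fun x => toTuple x m) :=
    ((ContinuousLinearMap.proj m).comp toTupleCLM).differentiable
  have hf₀T := hf₀.comp hT
  exact ((((hf₁.comp hT).smul_const (e 0)).add (((hcoord 1).mul hf₀T).smul_const (e 1))).add
    (((hcoord 2).mul hf₀T).smul_const (e 2))).add (((hcoord 3).mul hf₀T).smul_const (e 3))

def reprLineDeriv (f₀ f₁ : (Fin 4 → ℝ) → ℝ) (c v : ℍ[ℝ]) : ℍ[ℝ] :=
  let p := toTuple c
  fderiv ℝ f₁ p (toTuple v) • e 0 +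
    (v.imI * f₀ p + c.imI * fderiv ℝ f₀ p (toTuple v)) • e 1 +
    (v.imJ * f₀ p + c.imJ * fderiv ℝ f₀ p (toTuple v)) • e 2 +
    (v.imK * f₀ p + c.imK * fderiv ℝ f₀ p (toTuple v)) • e 3

lemma hasLineDerivAt_reprFun {c : ℍ[ℝ]} (hf₀ : DifferentiableAt ℝ f₀ (toTuple c))
    (hf₁ : DifferentiableAt ℝ f₁ (toTuple c)) (v : ℍ[ℝ]) :
    HasLineDerivAt ℝ (reprFun f₀ f₁) (reprLineDeriv f₀ f₁ c v) c v := by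
  have h₀ := hf₀.hasFDerivAt.hasLineDerivAt_comp_toTuple v
  have h₁ := hf₁.hasFDerivAt.hasLineDerivAt_comp_toTuple v
  have H := (((h₁.smul_const (e 0)).add
    (((hasLineDerivAt_toTuple_apply 1 c v).mul h₀).smul_const (e 1))).add
    (((hasLineDerivAt_toTuple_apply 2 c v).mul h₀).smul_const (e 2))).add
    (((hasLineDerivAt_toTuple_apply 3 c v).mul h₀).smul_const (e 3))
  refine H.congr_deriv ?_
  simp [reprLineDeriv]

end Represented

section Corrections

/-- The common shape of `flTwo`, `flThree`, `flFour`: the paper's `f←ᶜ_{9-i-j}` is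
`flShape (toTuple c) ((-1) ^ (i + j)) (i - 1) (j - 1) (8 - i - j) ψ` (indices of `Fin 4` start
at `0`), where `ψ m` is `f₀` at `toTuple c` with its `m`-th coordinate replaced by that of the
argument. -/
def flShape (p : Fin 4 → ℝ) (s : ℝ) (i j l : Fin 4) (ψ : Fin 4 → ℝ) : ℍ[ℝ] :=
  (p i * ψ i + p j * ψ j) • e l - (s * p i * ψ 0 + p l * ψ j) • e j +
    (s * p j * ψ 0 - p l * ψ i) • e i

lemma hasDerivAt_flShape_update {g : (Fin 4 → ℝ) → ℝ} {p : Fin 4 → ℝ}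
    (hg : DifferentiableAt ℝ g p) (s : ℝ) (i j l : Fin 4) :
    HasDerivAt (fun t => flShape p s i j l (fun m => g (Function.update p m (p m + t))))
      (flShape p s i j l (pd g · p)) 0 := by
  have hψ := hasDerivAt_comp_update hg
  exact (((((hψ i).const_mul (p i)).add ((hψ j).const_mul (p j))).smul_const (e l)).sub
    ((((hψ 0).const_mul (s * p i)).add ((hψ j).const_mul (p l))).smul_const (e j))).add
    ((((hψ 0).const_mul (s * p j)).sub ((hψ i).const_mul (p l))).smul_const (e i))

variable {f₀ : (Fin 4 → ℝ) → ℝ} {c : ℍ[ℝ]}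

lemma flTwo_eq_flShape (x : ℍ[ℝ]) :
    flTwo f₀ c x = flShape (toTuple c) ((-1) ^ (3 + 4)) 2 3 1
      (fun m => f₀ (Function.update (toTuple c) m (toTuple x m))) := by
  simp only [flTwo, flShape]
  congr! 5 <;> congr 1 <;> funext i <;> fin_cases i <;> rfl

lemma flThree_eq_flShape (x : ℍ[ℝ]) :
    flThree f₀ c x = flShape (toTuple c) ((-1) ^ (2 + 4)) 1 3 2
      (fun m => f₀ (Function.update (toTuple c) m (toTuple x m))) := by
  simp only [flThree, flShape]
  congr! 5 <;> congr 1 <;> funext i <;> fin_cases i <;> rfl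

lemma flFour_eq_flShape (x : ℍ[ℝ]) :
    flFour f₀ c x = flShape (toTuple c) ((-1) ^ (2 + 3)) 1 2 3
      (fun m => f₀ (Function.update (toTuple c) m (toTuple x m))) := by
  simp only [flFour, flShape]
  congr! 5 <;> congr 1 <;> funext i <;> fin_cases i <;> rfl

lemma hasDerivAt_flTwo (hf₀ : DifferentiableAt ℝ f₀ (toTuple c)) :
    HasDerivAt (fun t : ℝ => flTwo f₀ c (c + t • (e 0 + e 1 + e 2 + e 3)))
      (flShape (toTuple c) ((-1) ^ (3 + 4)) 2 3 1 (pd f₀ · (toTuple c))) 0 := by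
  simp only [flTwo_eq_flShape, toTuple_add_smul_sum_e]
  exact hasDerivAt_flShape_update hf₀ _ _ _ _

lemma hasDerivAt_flThree (hf₀ : DifferentiableAt ℝ f₀ (toTuple c)) :
    HasDerivAt (fun t : ℝ => flThree f₀ c (c + t • (e 0 + e 1 + e 2 + e 3)))
      (flShape (toTuple c) ((-1) ^ (2 + 4)) 1 3 2 (pd f₀ · (toTuple c))) 0 := by
  simp only [flThree_eq_flShape, toTuple_add_smul_sum_e]
  exact hasDerivAt_flShape_update hf₀ _ _ _ _

lemma hasDerivAt_flFour (hf₀ : DifferentiableAt ℝ f₀ (toTuple c)) :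
    HasDerivAt (fun t : ℝ => flFour f₀ c (c + t • (e 0 + e 1 + e 2 + e 3)))
      (flShape (toTuple c) ((-1) ^ (2 + 3)) 1 2 3 (pd f₀ · (toTuple c))) 0 := by
  simp only [flFour_eq_flShape, toTuple_add_smul_sum_e]
  exact hasDerivAt_flShape_update hf₀ _ _ _ _

end Corrections

section CorrectedDiff

variable {F G : ℍ[ℝ] → ℍ[ℝ]} {f₀ : (Fin 4 → ℝ) → ℝ} {c : ℍ[ℝ]}

/-- `leftQuot F f₀ c Δq = Δq⁻¹ * correctedDiff F f₀ c Δq` holds definitionally. -/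
def correctedDiff (F : ℍ[ℝ] → ℍ[ℝ]) (f₀ : (Fin 4 → ℝ) → ℝ) (c Δq : ℍ[ℝ]) : ℍ[ℝ] :=
  F (c + Δq) - F c +
    (flTwo f₀ c (c + Δq.imI • (e 0 + e 1 + e 2 + e 3)) - flTwo f₀ c c) +
    (flThree f₀ c (c + Δq.imJ • (e 0 + e 1 + e 2 + e 3)) - flThree f₀ c c) +
    (flFour f₀ c (c + Δq.imK • (e 0 + e 1 + e 2 + e 3)) - flFour f₀ c c)

lemma correctedDiff_zero : correctedDiff F f₀ c 0 = 0 := by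
  simp [correctedDiff]

lemma Filter.EventuallyEq.correctedDiff (h : F =ᶠ[𝓝 c] G) :
    correctedDiff F f₀ c =ᶠ[𝓝 0] correctedDiff G f₀ c := by
  have hshift : (fun q => F (c + q)) =ᶠ[𝓝 0] fun q => G (c + q) :=
    h.comp_tendsto ((continuous_const_add c).tendsto' 0 c (add_zero c))
  filter_upwards [hshift] with q hq
  simp only [_root_.correctedDiff, hq, h.self_of_nhds]

lemma HasLineDerivAt.correctedDiff {D T₂ T₃ T₄ v : ℍ[ℝ]} (hF : HasLineDerivAt ℝ F D c v)
    (h₂ : HasDerivAt (fun t : ℝ => flTwo f₀ c (c + t • (e 0 + e 1 + e 2 + e 3))) T₂ 0)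
    (h₃ : HasDerivAt (fun t : ℝ => flThree f₀ c (c + t • (e 0 + e 1 + e 2 + e 3))) T₃ 0)
    (h₄ : HasDerivAt (fun t : ℝ => flFour f₀ c (c + t • (e 0 + e 1 + e 2 + e 3))) T₄ 0) :
    HasLineDerivAt ℝ (correctedDiff F f₀ c) (D + (v.imI • T₂ + v.imJ • T₃ + v.imK • T₄)) 0 v := by
  have hcoord (m : Fin 4) : HasDerivAt (fun t : ℝ => toTuple (t • v) m) (toTuple v m) 0 := by
    simpa [HasLineDerivAt] using hasLineDerivAt_toTuple_apply m 0 v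
  have H := (((hF.sub_const (F c)).add
    ((h₂.scomp_of_eq 0 (hcoord 1) (by simp)).sub_const (flTwo f₀ c c))).add
    ((h₃.scomp_of_eq 0 (hcoord 2) (by simp)).sub_const (flThree f₀ c c))).add
    ((h₄.scomp_of_eq 0 (hcoord 3) (by simp)).sub_const (flFour f₀ c c))
  rw [HasLineDerivAt]
  simp only [zero_add]
  exact H.congr_deriv (by simp only [add_assoc]; rfl)

end CorrectedDiff

section CauchyRiemann

variable {f₀ f₁ : (Fin 4 → ℝ) → ℝ} {c : ℍ[ℝ]}

def correctionLineDeriv (f₀ : (Fin 4 → ℝ) → ℝ) (c v : ℍ[ℝ]) : ℍ[ℝ] :=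
  let p := toTuple c
  v.imI • flShape p ((-1) ^ (3 + 4)) 2 3 1 (pd f₀ · p) +
    v.imJ • flShape p ((-1) ^ (2 + 4)) 1 3 2 (pd f₀ · p) +
    v.imK • flShape p ((-1) ^ (2 + 3)) 1 2 3 (pd f₀ · p)

lemma hasLineDerivAt_correctedDiff_reprFun (hf₀ : DifferentiableAt ℝ f₀ (toTuple c))
    (hf₁ : DifferentiableAt ℝ f₁ (toTuple c)) (v : ℍ[ℝ]) :
    HasLineDerivAt ℝ (correctedDiff (reprFun f₀ f₁) f₀ c)
      (reprLineDeriv f₀ f₁ c v + correctionLineDeriv f₀ c v) 0 v :=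
  (hasLineDerivAt_reprFun hf₀ hf₁ v).correctedDiff (hasDerivAt_flTwo hf₀)
    (hasDerivAt_flThree hf₀) (hasDerivAt_flFour hf₀)

lemma regularEqs_of_lineDeriv_eq_mul {L : ℍ[ℝ]}
    (h : ∀ k, reprLineDeriv f₀ f₁ c (e k) + correctionLineDeriv f₀ c (e k) = e k * L) :
    RegularEqs f₀ f₁ (toTuple c) ∧ L = reprLineDeriv f₀ f₁ c (e 0) := by
  have h0 := h 0
  have h1 := h 1
  have h2 := h 2
  have h3 := h 3
  simp only [reprLineDeriv, correctionLineDeriv, flShape, fderiv_apply_toTuple_e,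
    Quaternion.ext_iff, Fin.isValue, toTuple_apply_one, toTuple_apply_two, toTuple_apply_three,
    Nat.reduceAdd, smul_add, smul_eq_mul, Quaternion.re_add, Quaternion.re_smul, Quaternion.re_sub,
    Quaternion.re_mul, Quaternion.imI_add, Quaternion.imI_smul, Quaternion.imI_sub,
    Quaternion.imI_mul, Quaternion.imJ_add, Quaternion.imJ_smul, Quaternion.imJ_sub,
    Quaternion.imJ_mul, Quaternion.imK_add, Quaternion.imK_smul, Quaternion.imK_sub,
    Quaternion.imK_mul] at h0 h1 h2 h3 ⊢
  simp only [Fin.isValue, e, Matrix.cons_val_zero, Matrix.cons_val_one, Matrix.cons_val,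
    Quaternion.re_one, Quaternion.imI_one, Quaternion.imJ_one, Quaternion.imK_one, mul_one,
    one_mul, zero_mul, mul_zero, zero_add, add_zero, sub_self, sub_zero, zero_sub,
    neg_add_rev] at h0 h1 h2 h3 ⊢
  norm_num at h1 h2 h3
  obtain ⟨h0r, h0i, h0j, h0k⟩ := h0
  obtain ⟨h1r, h1i, h1j, h1k⟩ := h1
  obtain ⟨h2r, h2i, h2j, h2k⟩ := h2
  obtain ⟨h3r, h3i, h3j, h3k⟩ := h3
  refine ⟨⟨?_, fun i hi => ?_, fun i j hi hj hij => ?_⟩, ?_, ?_, ?_, ?_⟩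
  · simp only [toTuple_apply_one, toTuple_apply_two, toTuple_apply_three]
    linarith
  · fin_cases i <;> simp only [Fin.zero_eta, Fin.mk_one, Fin.reduceFinMk, Fin.isValue, ne_eq,
      not_true_eq_false, toTuple_apply_one, toTuple_apply_two, toTuple_apply_three] at hi ⊢ <;>
      linarith
  · fin_cases i <;> fin_cases j <;>
      simp only [Fin.zero_eta, Fin.mk_one, Fin.reduceFinMk, Fin.isValue, ne_eq, not_true_eq_false,
        toTuple_apply_one, toTuple_apply_two, toTuple_apply_three] at hi hj hij ⊢ <;>
      linarith
  all_goals linarith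

end CauchyRiemann

/-- if the left difference quotient tends to some `L ∈ ℍ` as `Δq → 0`,
then `f` is algebraic regular at `c` and `L = ∂f/∂x₁(c)`. -/
theorem algebraicRegularAt_of_tendsto_leftQuot (U : Set ℍ[ℝ]) (hU : IsOpen U)
    (f : ℍ[ℝ] → ℍ[ℝ]) (f₀ f₁ : (Fin 4 → ℝ) → ℝ)
    (hf₀ : ContDiff ℝ 1 f₀) (hf₁ : ContDiff ℝ 1 f₁)
    (hf : Represents f U f₀ f₁) (c : ℍ[ℝ]) (hc : c ∈ U) (L : ℍ[ℝ])
    (hL : Filter.Tendsto (leftQuot f f₀ c) (nhdsWithin 0 {q : ℍ[ℝ] | q ≠ 0}) (nhds L)) :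
    AlgebraicRegularAt f U c ∧ L = fderiv ℝ f c (e 0) := by
  have hd₀ := hf₀.differentiable one_ne_zero
  have hd₁ := hf₁.differentiable one_ne_zero
  have hrepr : f =ᶠ[𝓝 c] reprFun f₀ f₁ := hf.eventuallyEq hU hc
  have hquot : Tendsto (fun q => q⁻¹ * correctedDiff (reprFun f₀ f₁) f₀ c q) (𝓝[≠] 0) (𝓝 L) :=
    hL.congr' ((EventuallyEq.rfl.mul hrepr.correctedDiff).filter_mono nhdsWithin_le_nhds)
  have hlineDeriv (k : Fin 4) :
      reprLineDeriv f₀ f₁ c (e k) + correctionLineDeriv f₀ c (e k) = e k * L :=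
    (hasLineDerivAt_correctedDiff_reprFun (hd₀ _) (hd₁ _) (e k)).eq_mul_of_tendsto_inv_mul
      (e_ne_zero k) correctedDiff_zero hquot
  obtain ⟨hreg, hL₀⟩ := regularEqs_of_lineDeriv_eq_mul hlineDeriv
  refine ⟨⟨f₀, f₁, hf₀, hf₁, hf, hreg⟩, ?_⟩
  rw [hL₀, hrepr.fderiv_eq]
  exact (hasLineDerivAt_reprFun (hd₀ _) (hd₁ _) (e 0)).unique
    ((differentiable_reprFun hd₀ hd₁ c).hasFDerivAt.hasLineDerivAt (e 0))
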